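/- arXiv:0811.2660 — 4 statements merged into one kernel-verified Lean document; each statement's English description precedes it below -/
import Mathlib

section
/- With φ as above (the sum over increasing multi-indices of determinants involving the derivatives f'_{i₁,...,i_k}(x)), evaluating φ on basis vectors gives: for any 1 ≤ i₁ < ... < i_{k+1} ≤ n, φ(e_{i₁},...,e_{i_{k+1}}) = Σ_{j=1}^{k+1} (−1)^{j+1} ∂f_{i₁,...,î_j,...,i_{k+1}}/∂x_{i_j}(x), where î_j means that index i_j is omitted from the multi-index. -/
open Matrix

/-!
In the determinant indexed by `s`, the row reading off the coordinate `s p` vanishes on the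
basis vectors `e_{t q}` unless `s p` is one of the `t q`. So only the `s` whose range lies in
that of `t` contribute, and these are exactly the faces `t ∘ j.succAbove` (omit `t j`). For
such a face the rows below the first one form the identity with column `j` removed, so Laplace
expansion along the first row leaves the single term `(-1)^j * ∂f_{t ∘ j.succAbove}/∂x_{t j}`.
-/

theorem StrictMono.exists_eq_succAbove {k : ℕ} {σ : Fin k → Fin (k + 1)} (hσ : StrictMono σ) :
    ∃ j : Fin (k + 1), σ = j.succAbove := by
  have hcard : (Finset.univ.image σ)ᶜ.card = 1 := by
    simp [Finset.card_compl, Finset.card_image_of_injective _ hσ.injective]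
  obtain ⟨j, hj⟩ := Finset.card_eq_one.mp hcard
  refine ⟨j, (hσ.range_inj (Fin.strictMono_succAbove j)).mp ?_⟩
  rw [Fin.range_succAbove, ← Finset.coe_singleton, ← hj, Finset.coe_compl, compl_compl]
  simp

theorem StrictMono.exists_eq_comp_succAbove {α : Type*} [Preorder α] {k : ℕ}
    {t : Fin (k + 1) → α} {s : Fin k → α} (ht : StrictMono t) (hs : StrictMono s)
    (hst : ∀ p, ∃ q, s p = t q) : ∃ j : Fin (k + 1), s = t ∘ j.succAbove := by
  choose σ hσ using hst
  have hσ_mono : StrictMono σ := fun p p' hpp' => ht.lt_iff_lt.mp (hσ p ▸ hσ p' ▸ hs hpp')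
  obtain ⟨j, rfl⟩ := hσ_mono.exists_eq_succAbove
  exact ⟨j, funext hσ⟩

section

variable {R : Type*} [CommRing R] {n k : ℕ}

theorem det_cases_single_eq_zero (r : Fin (k + 1) → R) (t : Fin (k + 1) → Fin n)
    (s : Fin k → Fin n) {p : Fin k} (hp : ∀ q, s p ≠ t q) :
    det (of fun i q : Fin (k + 1) =>
      Fin.cases (r q) (fun i' => (Pi.single (t q) (1 : R) : Fin n → R) (s i')) i) = (0 : R) :=
  det_eq_zero_of_row_eq_zero p.succ fun q => by
    simp [Pi.single_apply, hp q]

theorem det_cases_single_comp_succAbove (r : Fin (k + 1) → R) {t : Fin (k + 1) → Fin n}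
    (ht : Function.Injective t) (j : Fin (k + 1)) :
    det (of fun i q : Fin (k + 1) =>
      Fin.cases (r q) (fun i' => (Pi.single (t q) (1 : R) : Fin n → R) (t (j.succAbove i'))) i) =
      (-1 : R) ^ (j : ℕ) * r j := by
  have hsingle : ∀ q m, (Pi.single (t q) (1 : R) : Fin n → R) (t m) =
      (Pi.single q (1 : R) : Fin (k + 1) → R) m := fun q m => by
    simp only [Pi.single_apply, ht.eq_iff]
  simp only [hsingle]
  rw [det_succ_row_zero, Finset.sum_eq_single j]
  · simp only [submatrix, of_apply, Fin.cases_succ, Fin.cases_zero, Pi.single_apply, ← one_apply]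
    rw [← submatrix, submatrix_one _ Fin.succAbove_right_injective, det_one, mul_one]
  · intro q _ hqj
    obtain ⟨q₀, hq₀⟩ := Fin.exists_succAbove_eq (Ne.symm hqj)
    rw [det_eq_zero_of_column_eq_zero q₀ fun i' => ?_, mul_zero]
    simp [hq₀, Pi.single_apply, Fin.succAbove_ne]
  · simp

end

theorem stmt7_general (n k : ℕ) (x : Fin n → ℝ)
    (f : {s : Fin k → Fin n // StrictMono s} → (Fin n → ℝ) → ℝ)
    (φ : (Fin (k + 1) → (Fin n → ℝ)) → ℝ)
    (hφ : ∀ a, φ a = ∑ s : {s : Fin k → Fin n // StrictMono s},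
      Matrix.det (Matrix.of fun p q : Fin (k + 1) =>
        Fin.cases (fderiv ℝ (f s) x (a q)) (fun p' => a q (s.1 p')) p))
    (t : Fin (k + 1) → Fin n) (ht : StrictMono t) :
    φ (fun q => Pi.single (t q) 1) =
      ∑ j : Fin (k + 1), (-1 : ℝ) ^ (j : ℕ) *
        fderiv ℝ (f ⟨fun p => t (j.succAbove p),
          ht.comp (Fin.strictMono_succAbove j)⟩) x (Pi.single (t j) 1) := by
  let face : Fin (k + 1) → {s : Fin k → Fin n // StrictMono s} :=
    fun j => ⟨t ∘ j.succAbove, ht.comp (Fin.strictMono_succAbove j)⟩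
  have hface_inj : Function.Injective face := fun j j' h =>
    Fin.succAbove_left_injective (ht.injective.comp_left (congrArg Subtype.val h))
  rw [hφ]
  refine (Fintype.sum_of_injective face hface_inj _ _ (fun s hs => ?_)
    (fun j => (det_cases_single_comp_succAbove
      (fun q => fderiv ℝ (f (face j)) x (Pi.single (t q) 1)) ht.injective j).symm)).symm
  by_cases hst : ∀ p, ∃ q, s.1 p = t q
  · obtain ⟨j, hj⟩ := ht.exists_eq_comp_succAbove s.2 hst
    exact absurd ⟨j, Subtype.ext hj.symm⟩ hs
  · push Not at hst
    obtain ⟨p, hp⟩ := hst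
    exact det_cases_single_eq_zero _ t s.1 hp

/-- Evaluating `φ` (the sum over increasing multi-indices of determinants involving
the derivatives of the coefficient functions) on basis vectors `e_{t 1},...,e_{t (k+1)}`
for an increasing `(k+1)`-multi-index `t` gives the coordinate of the exterior
derivative: `Σ_j (−1)^{j+1} ∂f_{t∘(omit j)}/∂x_{t j}(x)`. -/
theorem stmt7 (n k : ℕ) (x : Fin n → ℝ)
    (f : {s : Fin k → Fin n // StrictMono s} → (Fin n → ℝ) → ℝ)
    (hf : ∀ s, DifferentiableAt ℝ (f s) x)
    (φ : (Fin (k + 1) → (Fin n → ℝ)) → ℝ)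
    (hφ : ∀ a, φ a = ∑ s : {s : Fin k → Fin n // StrictMono s},
      Matrix.det (Matrix.of fun p q : Fin (k + 1) =>
        Fin.cases (fderiv ℝ (f s) x (a q)) (fun p' => a q (s.1 p')) p))
    (t : Fin (k + 1) → Fin n) (ht : StrictMono t) :
    φ (fun q => Pi.single (t q) 1) =
      ∑ j : Fin (k + 1), (-1 : ℝ) ^ (j : ℕ) *
        fderiv ℝ (f ⟨fun p => t (j.succAbove p),
          ht.comp (Fin.strictMono_succAbove j)⟩) x (Pi.single (t j) 1) :=
  stmt7_general n k x f φ hφ t ht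
end

section
/- Let F = (f,g,h) : ℝ³ → ℝ³ be differentiable at x. Define B(e₁,e₂) = F(x)⋅a e₁ + F(x + e₁ a)⋅b e₂ − F(x + e₂ b)⋅a e₁ − F(x)⋅b e₂ for real e₁, e₂ (the circulation of the 1-form f dx + g dy + h dz around the infinitesimal parallelogram spanned by a, b). Then the second-order mixed partial derivative ∂²B/∂e₁∂e₂ at (0,0) equals (curl F)(x) ⋅ (a × b). -/
open Matrix

/-! Only the terms `F (x + e₁ • a) ⬝ᵥ b * e₂` and `F (x + e₂ • b) ⬝ᵥ a * e₁` of the circulation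
depend on both variables, so its mixed partial at the origin is `DF(x) a ⬝ᵥ b - DF(x) b ⬝ᵥ a`:
the antisymmetric part of the Jacobian evaluated on `(a, b)`. In dimension three that
antisymmetric part is `(curl F)(x) ⬝ᵥ (a × b)`. -/

section Circulation

variable {ι : Type*} [Fintype ι]

theorem hasDerivAt_dotProduct_comp_add_smul {F : (ι → ℝ) → ι → ℝ} {x : ι → ℝ}
    (hF : DifferentiableAt ℝ F x) (v w : ι → ℝ) :
    HasDerivAt (fun t : ℝ => F (x + t • v) ⬝ᵥ w) (fderiv ℝ F x v ⬝ᵥ w) 0 := by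
  have hline : HasDerivAt (fun t : ℝ => x + t • v) v 0 := by
    simpa using ((hasDerivAt_id (0 : ℝ)).smul_const v).const_add x
  have hF' : HasDerivAt (fun t : ℝ => F (x + t • v)) (fderiv ℝ F x v) 0 := by
    refine HasFDerivAt.comp_hasDerivAt 0 ?_ hline
    simpa using hF.hasFDerivAt
  exact HasDerivAt.fun_sum fun i _ => (hasDerivAt_pi.1 hF' i).mul_const (w i)

def parallelogramCirculation (F : (ι → ℝ) → ι → ℝ) (x a b : ι → ℝ) (e₁ e₂ : ℝ) : ℝ :=
  F x ⬝ᵥ a * e₁ + F (x + e₁ • a) ⬝ᵥ b * e₂ - F (x + e₂ • b) ⬝ᵥ a * e₁ - F x ⬝ᵥ b * e₂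

variable {F : (ι → ℝ) → ι → ℝ} {x : ι → ℝ}

theorem hasDerivAt_parallelogramCirculation_snd (hF : DifferentiableAt ℝ F x) (a b : ι → ℝ)
    (e₁ : ℝ) :
    HasDerivAt (parallelogramCirculation F x a b e₁)
      (F (x + e₁ • a) ⬝ᵥ b - (fderiv ℝ F x b ⬝ᵥ a) * e₁ - F x ⬝ᵥ b) 0 := by
  have := ((((hasDerivAt_id' (0 : ℝ)).const_mul (F (x + e₁ • a) ⬝ᵥ b)).const_add
    (F x ⬝ᵥ a * e₁)).fun_sub ((hasDerivAt_dotProduct_comp_add_smul hF b a).mul_const e₁)).fun_sub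
    ((hasDerivAt_id' (0 : ℝ)).const_mul (F x ⬝ᵥ b))
  exact this.congr_deriv (by ring)

theorem deriv_deriv_parallelogramCirculation (hF : DifferentiableAt ℝ F x) (a b : ι → ℝ) :
    deriv (fun e₁ => deriv (parallelogramCirculation F x a b e₁) 0) 0 =
      fderiv ℝ F x a ⬝ᵥ b - fderiv ℝ F x b ⬝ᵥ a := by
  simp only [fun e₁ => (hasDerivAt_parallelogramCirculation_snd hF a b e₁).deriv]
  have := ((hasDerivAt_dotProduct_comp_add_smul hF a b).sub
    ((hasDerivAt_id (0 : ℝ)).const_mul (fderiv ℝ F x b ⬝ᵥ a))).sub_const (F x ⬝ᵥ b)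
  simpa using this.deriv

end Circulation

theorem Matrix.mulVec_dotProduct_sub_mulVec_dotProduct (M : Matrix (Fin 3) (Fin 3) ℝ)
    (a b : Fin 3 → ℝ) :
    M *ᵥ a ⬝ᵥ b - M *ᵥ b ⬝ᵥ a =
      ![M 2 1 - M 1 2, M 0 2 - M 2 0, M 1 0 - M 0 1] ⬝ᵥ crossProduct a b := by
  simp [mulVec, dotProduct, Fin.sum_univ_three, crossProduct]
  ring

/-- The mixed second partial at `(0,0)` of the circulation
`B(e₁,e₂) = F(x)⬝a e₁ + F(x+e₁a)⬝b e₂ − F(x+e₂b)⬝a e₁ − F(x)⬝b e₂`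
equals `(curl F)(x) ⬝ (a × b)`. -/
theorem stmt10 (f g h : (Fin 3 → ℝ) → ℝ) (x a b : Fin 3 → ℝ)
    (F : (Fin 3 → ℝ) → (Fin 3 → ℝ)) (hF : ∀ y, F y = ![f y, g y, h y])
    (hf : DifferentiableAt ℝ f x) (hg : DifferentiableAt ℝ g x)
    (hh : DifferentiableAt ℝ h x)
    (B : ℝ → ℝ → ℝ)
    (hB : ∀ e₁ e₂, B e₁ e₂ =
      F x ⬝ᵥ a * e₁ + F (x + e₁ • a) ⬝ᵥ b * e₂ -
      F (x + e₂ • b) ⬝ᵥ a * e₁ - F x ⬝ᵥ b * e₂) :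
    deriv (fun e₁ => deriv (fun e₂ => B e₁ e₂) 0) 0 =
      ![fderiv ℝ h x (Pi.single 1 1) - fderiv ℝ g x (Pi.single 2 1),
        fderiv ℝ f x (Pi.single 2 1) - fderiv ℝ h x (Pi.single 0 1),
        fderiv ℝ g x (Pi.single 0 1) - fderiv ℝ f x (Pi.single 1 1)] ⬝ᵥ
        crossProduct a b := by
  have hFeq : F = fun y => ![f y, g y, h y] := funext hF
  have hFx : DifferentiableAt ℝ F x := by
    simp [hFeq, differentiableAt_pi, Fin.forall_fin_succ, hf, hg, hh]
  have hB' : B = parallelogramCirculation F x a b := funext fun e₁ => funext (hB e₁)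
  set J := LinearMap.toMatrix' (fderiv ℝ F x : (Fin 3 → ℝ) →ₗ[ℝ] Fin 3 → ℝ)
  have hJ : ∀ v, fderiv ℝ F x v = J *ᵥ v := fun v => (LinearMap.toMatrix'_mulVec _ v).symm
  have hJ_apply : ∀ i j, J i j = fderiv ℝ (fun y => F y i) x (Pi.single j 1) := fun i j => by
    rw [fderiv_apply hFx i]
    rfl
  rw [hB', deriv_deriv_parallelogramCirculation hFx, hJ, hJ,
    Matrix.mulVec_dotProduct_sub_mulVec_dotProduct]
  simp [hJ_apply, hFeq]
end

section
/- Let F = (f,g,h) : ℝ³ → ℝ³ be differentiable at x, and fix a,b,c ∈ ℝ³. Define the flux boundary sum S(e₁,e₂,e₃) = [F(x + e₁a) − F(x)]⋅(b×c) e₂e₃ + [F(x) − F(x + e₂b)]⋅(a×c) e₁e₃ + [F(x + e₃c) − F(x)]⋅(a×b) e₁e₂. Then the third-order mixed partial derivative ∂³S/∂e₁∂e₂∂e₃ at (0,0,0) equals (div F)(x) · det(a,b,c). -/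
/-!
Each summand of `S` is a function of one variable times a monomial in the other two, so the
mixed third partial at the origin is the sum of the three one-variable derivatives at `0`. These
are `DF(x) v ⬝ (cross product)`, and since the rows `b × c, c × a, a × b` form the adjugate of the
matrix `P` with columns `a, b, c`, for every matrix `M`
`Ma ⬝ (b × c) + Mb ⬝ (c × a) + Mc ⬝ (a × b) = tr (adj P * M * P) = tr M * det P`.
With `M = DF(x)`, `tr M = div F(x)`.
-/

open Matrix

theorem deriv_deriv_deriv_mixed_product_sum {𝕜 : Type*} [NontriviallyNormedField 𝕜]
    {A B C : 𝕜 → 𝕜} {A' B' C' : 𝕜}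
    (hA : HasDerivAt A A' 0) (hB : HasDerivAt B B' 0) (hC : HasDerivAt C C' 0) :
    deriv (fun e₁ => deriv (fun e₂ => deriv (fun e₃ =>
        A e₁ * (e₂ * e₃) + B e₂ * (e₁ * e₃) + C e₃ * (e₁ * e₂)) 0) 0) 0 = A' + B' + C' := by
  have hid := hasDerivAt_id' (0 : 𝕜)
  have inner (e₁ e₂ : 𝕜) :
      deriv (fun e₃ => A e₁ * (e₂ * e₃) + B e₂ * (e₁ * e₃) + C e₃ * (e₁ * e₂)) 0 =
        A e₁ * e₂ + B e₂ * e₁ + C' * (e₁ * e₂) :=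
    (((hid.const_mul e₂).const_mul (A e₁)).add ((hid.const_mul e₁).const_mul (B e₂)) |>.add
      (hC.mul_const (e₁ * e₂))).deriv.trans (by ring)
  have middle (e₁ : 𝕜) :
      deriv (fun e₂ => A e₁ * e₂ + B e₂ * e₁ + C' * (e₁ * e₂)) 0 = A e₁ + B' * e₁ + C' * e₁ :=
    ((hid.const_mul (A e₁)).add (hB.mul_const e₁) |>.add
      ((hid.const_mul e₁).const_mul C')).deriv.trans (by ring)
  simp only [inner, middle]
  exact ((hA.add (hid.const_mul B')).add (hid.const_mul C')).deriv.trans (by ring)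

theorem HasFDerivAt.hasDerivAt_sub_dotProduct {𝕜 E ι : Type*} [NontriviallyNormedField 𝕜]
    [NormedAddCommGroup E] [NormedSpace 𝕜 E] [Fintype ι] {F : E → ι → 𝕜} {L : E →L[𝕜] ι → 𝕜}
    {x : E} (hF : HasFDerivAt F L x) (v : E) (u : ι → 𝕜) :
    HasDerivAt (fun t : 𝕜 => (F (x + t • v) - F x) ⬝ᵥ u) (L v ⬝ᵥ u) 0 := by
  have hline := hasDerivAt_pi.1 (hF.hasLineDerivAt v)
  simpa only [dotProduct, Pi.sub_apply] using
    HasDerivAt.fun_sum fun i _ => ((hline i).sub_const (F x i)).mul_const (u i)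

theorem cyclic_sum_mulVec_dotProduct_cross {R : Type*} [CommRing R] (M : Matrix (Fin 3) (Fin 3) R)
    (a b c : Fin 3 → R) :
    (M *ᵥ a) ⬝ᵥ (b ⨯₃ c) + (M *ᵥ b) ⬝ᵥ (c ⨯₃ a) + (M *ᵥ c) ⬝ᵥ (a ⨯₃ b) =
      M.trace * det ![a, b, c] := by
  rw [← triple_product_eq_det]
  simp only [mulVec, dotProduct, Fin.sum_univ_three, cross_apply, trace_fin_three,
    cons_val_zero, cons_val_one, cons_val_two, head_cons, tail_cons]
  ring

/-- The mixed third partial at `(0,0,0)` of the flux boundary sum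
`S(e₁,e₂,e₃) = [F(x+e₁a)−F(x)]⬝(b×c) e₂e₃ + [F(x)−F(x+e₂b)]⬝(a×c) e₁e₃
             + [F(x+e₃c)−F(x)]⬝(a×b) e₁e₂`
equals `(div F)(x) · det(a,b,c)`. -/
theorem stmt11 (f g h : (Fin 3 → ℝ) → ℝ) (x a b c : Fin 3 → ℝ)
    (F : (Fin 3 → ℝ) → (Fin 3 → ℝ)) (hF : ∀ y, F y = ![f y, g y, h y])
    (hf : ContDiffAt ℝ 1 f x) (hg : ContDiffAt ℝ 1 g x) (hh : ContDiffAt ℝ 1 h x)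
    (S : ℝ → ℝ → ℝ → ℝ)
    (hS : ∀ e₁ e₂ e₃, S e₁ e₂ e₃ =
      (F (x + e₁ • a) - F x) ⬝ᵥ crossProduct b c * (e₂ * e₃) +
      (F x - F (x + e₂ • b)) ⬝ᵥ crossProduct a c * (e₁ * e₃) +
      (F (x + e₃ • c) - F x) ⬝ᵥ crossProduct a b * (e₁ * e₂)) :
    deriv (fun e₁ => deriv (fun e₂ => deriv (fun e₃ => S e₁ e₂ e₃) 0) 0) 0 =
      (fderiv ℝ f x (Pi.single 0 1) + fderiv ℝ g x (Pi.single 1 1) +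
        fderiv ℝ h x (Pi.single 2 1)) *
        Matrix.det (Matrix.of fun i j => ![a, b, c] j i) := by
  set L := ContinuousLinearMap.pi ![fderiv ℝ f x, fderiv ℝ g x, fderiv ℝ h x]
  have hL : HasFDerivAt F L x := by
    have hF' : F = fun y i => ![f, g, h] i y := by
      ext y i; fin_cases i <;> simp [hF]
    rw [hF']
    refine hasFDerivAt_pi.2 fun i => ?_
    fin_cases i
    exacts [hf.differentiableAt_one.hasFDerivAt, hg.differentiableAt_one.hasFDerivAt,
      hh.differentiableAt_one.hasFDerivAt]
  have hS' (e₁ e₂ e₃ : ℝ) : S e₁ e₂ e₃ =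
      (F (x + e₁ • a) - F x) ⬝ᵥ (b ⨯₃ c) * (e₂ * e₃) +
      (F (x + e₂ • b) - F x) ⬝ᵥ (c ⨯₃ a) * (e₁ * e₃) +
      (F (x + e₃ • c) - F x) ⬝ᵥ (a ⨯₃ b) * (e₁ * e₂) := by
    rw [hS, ← neg_sub (F (x + e₂ • b)), neg_dotProduct, ← dotProduct_neg, cross_anticomm]
  set M := LinearMap.toMatrix' (L : (Fin 3 → ℝ) →ₗ[ℝ] Fin 3 → ℝ)
  have hM (v : Fin 3 → ℝ) : L v = M *ᵥ v := (LinearMap.toMatrix'_mulVec _ v).symm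
  calc _ = L a ⬝ᵥ (b ⨯₃ c) + L b ⬝ᵥ (c ⨯₃ a) + L c ⬝ᵥ (a ⨯₃ b) := by
        simp only [hS']
        exact deriv_deriv_deriv_mixed_product_sum (hL.hasDerivAt_sub_dotProduct a _)
          (hL.hasDerivAt_sub_dotProduct b _) (hL.hasDerivAt_sub_dotProduct c _)
    _ = M.trace * det ![a, b, c] := by
        simp only [hM]
        exact cyclic_sum_mulVec_dotProduct_cross M a b c
    _ = _ := by
        rw [← det_transpose]
        congr 1
        simp [M, L, trace_fin_three, LinearMap.toMatrix'_apply]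
end

section
/- Let k < n, fix x ∈ ℝⁿ, and let ω be the differential k-form Σ_{i₁<...<i_k} f_{i₁,...,i_k} dx_{i₁}∧...∧dx_{i_k} with each coefficient differentiable at x. Then the alternating (k+1)-form φ(a¹,...,a^{k+1}) = Σ_{i₁<...<i_k} det[first row f'_{i₁,...,i_k}(x)(aᑫ); rows (aᑫ)_{i_p}] equals Σ_{1 ≤ i₁<...<i_{k+1} ≤ n} (Σ_{j=1}^{k+1} (−1)^{j+1} ∂f_{i₁,...,î_j,...,i_{k+1}}/∂x_{i_j}(x)) dx_{i₁}∧...∧dx_{i_{k+1}} as alternating multilinear maps on (ℝⁿ)^{k+1}. -/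
open Matrix

/-!
Expanding each determinant along its derivative row turns the left side into
`∑_{s, i} ∂f_s/∂x_i(x) · dx_i ∧ dx_{s 0} ∧ ⋯ ∧ dx_{s (k-1)}`. The terms with `i` in the range of
`s` vanish (two equal rows); the others are in bijection with pairs `(t, j)` of an increasing
`(k+1)`-tuple `t` and a position `j`, via `s = t ∘ j.succAbove` and `i = t j`. Moving row `j` of
`dx_{t 0} ∧ ⋯ ∧ dx_{t k}` to the top costs the sign `(-1)^j`.
-/

section StrictMono

variable {α : Type*} {m : ℕ}

lemma Function.Injective.range_comp_succAbove {t : Fin (m + 1) → α}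
    (ht : Function.Injective t) (j : Fin (m + 1)) :
    Set.range (t ∘ j.succAbove) = Set.range t \ {t j} := by
  rw [Set.range_comp, Fin.range_succAbove, Set.compl_eq_univ_sdiff, Set.image_sdiff ht,
    Set.image_univ, Set.image_singleton]

variable [LinearOrder α]

lemma StrictMono.eq_of_comp_succAbove_eq {t t' : Fin (m + 1) → α} (ht : StrictMono t)
    (ht' : StrictMono t') {j j' : Fin (m + 1)} (h : t ∘ j.succAbove = t' ∘ j'.succAbove)
    (h' : t j = t' j') : t = t' ∧ j = j' := by
  have hrange : Set.range t = Set.range t' := by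
    rw [← Set.insert_image_compl_eq_range t j, ← Set.insert_image_compl_eq_range t' j',
      ← Fin.range_succAbove, ← Fin.range_succAbove, ← Set.range_comp, ← Set.range_comp, h, h']
  obtain rfl := (ht.range_inj ht').1 hrange
  exact ⟨rfl, ht.injective h'⟩

lemma StrictMono.exists_comp_succAbove_eq {s : Fin m → α} (hs : StrictMono s) {i : α}
    (hi : i ∉ Set.range s) :
    ∃ t : Fin (m + 1) → α, StrictMono t ∧ ∃ j, t ∘ j.succAbove = s ∧ t j = i := by
  let A : Finset α := insert i (Finset.univ.image s)
  have hA : A.card = m + 1 := by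
    rw [Finset.card_insert_of_notMem (by simpa using hi),
      Finset.card_image_of_injective _ hs.injective, Finset.card_fin]
  let t := A.orderEmbOfFin hA
  have hrange : Set.range t = insert i (Set.range s) := by
    simp [t, A, Finset.range_orderEmbOfFin]
  obtain ⟨j, hj⟩ : i ∈ Set.range t := hrange ▸ Set.mem_insert i _
  refine ⟨t, t.strictMono, j, ?_, hj⟩
  refine ((t.strictMono.comp (Fin.strictMono_succAbove j)).range_inj hs).1 ?_
  rw [t.injective.range_comp_succAbove, hrange, hj, Set.insert_sdiff_self_of_notMem hi]

end StrictMono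

variable {R ι : Type*} [CommRing R] {m : ℕ}

/-- `dx_{g 0} ∧ ⋯ ∧ dx_{g (m-1)}` evaluated at `a 0, …, a (m-1)`. -/
def wedgeDx (g : Fin m → ι) (a : Fin m → ι → R) : R :=
  (of fun p q => a q (g p)).det

lemma wedgeDx_eq_zero_of_eq {g : Fin m → ι} {p p' : Fin m} (hne : p ≠ p') (h : g p = g p')
    (a : Fin m → ι → R) : wedgeDx g a = 0 :=
  det_zero_of_row_eq hne (by ext q; simp [h])

lemma wedgeDx_cons_succAbove (g : Fin (m + 1) → ι) (j : Fin (m + 1)) (a : Fin (m + 1) → ι → R) :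
    wedgeDx (Fin.cons (g j) fun p => g (j.succAbove p)) a = (-1) ^ (j : ℕ) * wedgeDx g a := by
  have hperm : (of fun p q => a q ((Fin.cons (g j) fun p => g (j.succAbove p) :
      Fin (m + 1) → ι) p)) = (of fun p q => a q (g p)).submatrix j.cycleRange.symm id := by
    ext p q
    cases p using Fin.cases <;> simp [Fin.cycleRange_symm_zero, Fin.cycleRange_symm_succ]
  rw [wedgeDx, hperm, det_permute, Equiv.Perm.sign_symm, Fin.sign_cycleRange, wedgeDx]
  simp

lemma det_of_cons_sum {κ : Type*} (c : κ → R) (v : κ → Fin (m + 1) → R)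
    (M : Fin m → Fin (m + 1) → R) (S : Finset κ) :
    (of (Fin.cons (∑ i ∈ S, c i • v i) M)).det = ∑ i ∈ S, c i * (of (Fin.cons (v i) M)).det := by
  have h := detRowAlternating.map_update_sum S 0 (fun i => c i • v i) (Fin.cons 0 M)
  simp_rw [AlternatingMap.map_update_smul, Fin.update_cons_zero] at h
  exact h

lemma det_cases_linearMap_eq_sum_wedgeDx [Fintype ι] [DecidableEq ι] (L : (ι → R) →ₗ[R] R)
    (s : Fin m → ι) (a : Fin (m + 1) → ι → R) :
    (of fun p q => Fin.cases (L (a q)) (fun p' => a q (s p')) p : Matrix (Fin (m + 1)) _ R).det =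
      ∑ i, L (Pi.single i 1) * wedgeDx (Fin.cons i s) a := by
  have hrow : (fun q => L (a q)) = ∑ i, L (Pi.single i 1) • fun q => a q i := by
    ext q
    rw [L.pi_apply_eq_sum_univ (a q), Finset.sum_apply]
    refine Finset.sum_congr rfl fun i _ => ?_
    simp only [Pi.smul_apply, smul_eq_mul, mul_comm (a q i)]
    congr
    ext j
    simp [Pi.single_apply, eq_comm]
  have h := det_of_cons_sum (fun i => L (Pi.single i 1)) (fun i q => a q i)
    (fun p' q => a q (s p')) Finset.univ
  rw [← hrow] at h
  convert h using 3 with i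
  · funext p
    cases p using Fin.cases <;> rfl
  · rw [wedgeDx]
    congr
    ext p q
    cases p using Fin.cases <;> rfl

lemma sum_sum_mul_wedgeDx_cons [LinearOrder ι] [Fintype ι]
    (c : {s : Fin m → ι // StrictMono s} → ι → R) (a : Fin (m + 1) → ι → R) :
    ∑ s : {s : Fin m → ι // StrictMono s}, ∑ i, c s i * wedgeDx (Fin.cons i s.1) a =
      ∑ t : {t : Fin (m + 1) → ι // StrictMono t},
        (∑ j : Fin (m + 1), (-1 : R) ^ (j : ℕ) *
          c ⟨fun p => t.1 (j.succAbove p), t.2.comp (Fin.strictMono_succAbove j)⟩ (t.1 j)) *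
        wedgeDx t.1 a := by
  simp only [Finset.sum_mul, ← Fintype.sum_prod_type']
  refine (Finset.sum_of_injOn (fun tj => (⟨fun p => tj.1.1 (tj.2.succAbove p),
    tj.1.2.comp (Fin.strictMono_succAbove tj.2)⟩, tj.1.1 tj.2)) ?_ (by simp) ?_ ?_).symm
  · rintro ⟨t, j⟩ - ⟨t', j'⟩ - h
    simp only [Prod.mk.injEq, Subtype.mk.injEq] at h
    obtain ⟨htt', rfl⟩ := t.2.eq_of_comp_succAbove_eq t'.2 h.1 h.2
    rw [Subtype.ext htt']
  · rintro ⟨s, i⟩ - hnot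
    by_cases hi : i ∈ Set.range s.1
    · obtain ⟨p, rfl⟩ := hi
      rw [wedgeDx_eq_zero_of_eq (Fin.succ_ne_zero p).symm (by simp), mul_zero]
    · obtain ⟨t, ht, j, hs, rfl⟩ := s.2.exists_comp_succAbove_eq hi
      exact absurd ⟨(⟨t, ht⟩, j), by simp, Prod.ext (Subtype.ext hs) rfl⟩ hnot
  · rintro ⟨t, j⟩ -
    rw [wedgeDx_cons_succAbove]
    ring

theorem stmt14_general (n k : ℕ) (x : Fin n → ℝ)
    (f : {s : Fin k → Fin n // StrictMono s} → (Fin n → ℝ) → ℝ)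
    (a : Fin (k + 1) → (Fin n → ℝ)) :
    (∑ s : {s : Fin k → Fin n // StrictMono s},
      Matrix.det (Matrix.of fun p q : Fin (k + 1) =>
        Fin.cases (fderiv ℝ (f s) x (a q)) (fun p' => a q (s.1 p')) p)) =
    ∑ t : {t : Fin (k + 1) → Fin n // StrictMono t},
      (∑ j : Fin (k + 1), (-1 : ℝ) ^ (j : ℕ) *
        fderiv ℝ (f ⟨fun p => t.1 (j.succAbove p),
          t.2.comp (Fin.strictMono_succAbove j)⟩) x (Pi.single (t.1 j) 1)) *
      Matrix.det (Matrix.of fun p q : Fin (k + 1) => a q (t.1 p)) := by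
  calc _ = ∑ s : {s : Fin k → Fin n // StrictMono s}, ∑ i,
          fderiv ℝ (f s) x (Pi.single i 1) * wedgeDx (Fin.cons i s.1) a :=
        Finset.sum_congr rfl fun s _ =>
          det_cases_linearMap_eq_sum_wedgeDx (fderiv ℝ (f s) x).toLinearMap s.1 a
    _ = _ := sum_sum_mul_wedgeDx_cons (fun s i => fderiv ℝ (f s) x (Pi.single i 1)) a

/-- Coordinate formula for the exterior derivative: for `k < n`, the alternating
`(k+1)`-form `φ(a¹,...,a^{k+1}) = Σ_{s increasing} det[first row (f s)'(x)(aᑫ);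
remaining rows (aᑫ)_{s p}]` equals
`Σ_{t increasing} (Σ_j (−1)^{j+1} ∂f_{t∘(omit j)}/∂x_{t j}(x)) dx_{t 1}∧...∧dx_{t(k+1)}`. -/
theorem stmt14 (n k : ℕ) (hkn : k < n) (x : Fin n → ℝ)
    (f : {s : Fin k → Fin n // StrictMono s} → (Fin n → ℝ) → ℝ)
    (hf : ∀ s, DifferentiableAt ℝ (f s) x)
    (a : Fin (k + 1) → (Fin n → ℝ)) :
    (∑ s : {s : Fin k → Fin n // StrictMono s},
      Matrix.det (Matrix.of fun p q : Fin (k + 1) =>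
        Fin.cases (fderiv ℝ (f s) x (a q)) (fun p' => a q (s.1 p')) p)) =
    ∑ t : {t : Fin (k + 1) → Fin n // StrictMono t},
      (∑ j : Fin (k + 1), (-1 : ℝ) ^ (j : ℕ) *
        fderiv ℝ (f ⟨fun p => t.1 (j.succAbove p),
          t.2.comp (Fin.strictMono_succAbove j)⟩) x (Pi.single (t.1 j) 1)) *
      Matrix.det (Matrix.of fun p q : Fin (k + 1) => a q (t.1 p)) :=
  stmt14_general n k x f a
end
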